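/- For every twice continuously real-differentiable complex-valued function f on U × ℂᵐ, the mixed commutator of a horizontal operator with its conjugate satisfies δ_α(δ_β̄ f) − δ_β̄(δ_α f) = (δ_β̄ N^γ_α)·∂̇_γ f − (δ_α N^γ̄_β̄)·∂̇_γ̄ f, where N^γ̄_β̄ denotes the complex conjugate of N^γ_β. (This is the local-operator form of the bracket [𝒳_α,𝒳_β̄]_𝒯 = (δ_β̄ N^γ_α)𝒱_γ − (δ_α N^γ̄_β̄)𝒱_γ̄ of the adapted frame on the complexified prolongation.) -/

import Mathlib

open Complex BigOperators

/-- Wirtinger derivative `∂_k g` in the base direction, for `g : ℂⁿ × ℂᵐ → ℂ`,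
defined through the real Fréchet derivative. -/
noncomputable def wz {n m : ℕ} (g : (Fin n → ℂ) × (Fin m → ℂ) → ℂ) (k : Fin n)
    (p : (Fin n → ℂ) × (Fin m → ℂ)) : ℂ :=
  (1/2) * (fderiv ℝ g p (Pi.single k 1, 0)
    - Complex.I * fderiv ℝ g p (Pi.single k Complex.I, 0))

/-- Conjugate Wirtinger derivative `∂̄_k g` in the base direction. -/
noncomputable def wzbar {n m : ℕ} (g : (Fin n → ℂ) × (Fin m → ℂ) → ℂ) (k : Fin n)
    (p : (Fin n → ℂ) × (Fin m → ℂ)) : ℂ :=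
  (1/2) * (fderiv ℝ g p (Pi.single k 1, 0)
    + Complex.I * fderiv ℝ g p (Pi.single k Complex.I, 0))

/-- Wirtinger derivative `∂̇_α g` in the fibre direction. -/
noncomputable def wu {n m : ℕ} (g : (Fin n → ℂ) × (Fin m → ℂ) → ℂ) (α : Fin m)
    (p : (Fin n → ℂ) × (Fin m → ℂ)) : ℂ :=
  (1/2) * (fderiv ℝ g p (0, Pi.single α 1)
    - Complex.I * fderiv ℝ g p (0, Pi.single α Complex.I))

/-- Conjugate Wirtinger derivative `∂̇_ᾱ g` in the fibre direction. -/
noncomputable def wubar {n m : ℕ} (g : (Fin n → ℂ) × (Fin m → ℂ) → ℂ) (α : Fin m)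
    (p : (Fin n → ℂ) × (Fin m → ℂ)) : ℂ :=
  (1/2) * (fderiv ℝ g p (0, Pi.single α 1)
    + Complex.I * fderiv ℝ g p (0, Pi.single α Complex.I))

/-- The anchored horizontal derivative `δ_α f = ρ^k_α·∂_k f − N^γ_α·∂̇_γ f`. -/
noncomputable def hdel {n m : ℕ} (ρ : Fin n → Fin m → (Fin n → ℂ) → ℂ)
    (N : Fin m → Fin m → (Fin n → ℂ) × (Fin m → ℂ) → ℂ)
    (f : (Fin n → ℂ) × (Fin m → ℂ) → ℂ) (α : Fin m)
    (p : (Fin n → ℂ) × (Fin m → ℂ)) : ℂ :=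
  (∑ k, ρ k α p.1 * wz f k p) - ∑ γ, N γ α p * wu f γ p

/-- The conjugate anchored horizontal derivative
`δ_β̄ f = (conj ρ^k_β)·∂̄_k f − (conj N^γ_β)·∂̇_γ̄ f`. -/
noncomputable def hdelbar {n m : ℕ} (ρ : Fin n → Fin m → (Fin n → ℂ) → ℂ)
    (N : Fin m → Fin m → (Fin n → ℂ) × (Fin m → ℂ) → ℂ)
    (f : (Fin n → ℂ) × (Fin m → ℂ) → ℂ) (β : Fin m)
    (p : (Fin n → ℂ) × (Fin m → ℂ)) : ℂ :=
  (∑ k, (starRingEnd ℂ) (ρ k β p.1) * wzbar f k p)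
    - ∑ γ, (starRingEnd ℂ) (N γ β p) * wubar f γ p

namespace Stmt9Aux

variable {E : Type*} [NormedAddCommGroup E] [NormedSpace ℝ E]

noncomputable def Wop (a b : ℂ) (v w : E) (g : E → ℂ) (p : E) : ℂ :=
  a * fderiv ℝ g p v + b * fderiv ℝ g p w

variable {a b a' b' : ℂ} {v w v' w' : E} {g h f : E → ℂ} {p : E}

lemma Wop_sub (hg : DifferentiableAt ℝ g p) (hh : DifferentiableAt ℝ h p) :
    Wop a b v w (fun q => g q - h q) p = Wop a b v w g p - Wop a b v w h p := by
  simp only [Wop, fderiv_fun_sub hg hh, ContinuousLinearMap.sub_apply]; ring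

lemma Wop_sum {ι : Type*} (s : Finset ι) (g : ι → E → ℂ)
    (hg : ∀ i ∈ s, DifferentiableAt ℝ (g i) p) :
    Wop a b v w (fun q => ∑ i ∈ s, g i q) p = ∑ i ∈ s, Wop a b v w (g i) p := by
  simp only [Wop, fderiv_fun_sum hg, ContinuousLinearMap.sum_apply, Finset.mul_sum,
    Finset.sum_add_distrib]

lemma Wop_mul (hg : DifferentiableAt ℝ g p) (hh : DifferentiableAt ℝ h p) :
    Wop a b v w (fun q => g q * h q) p
      = Wop a b v w g p * h p + g p * Wop a b v w h p := by
  simp only [Wop, fderiv_fun_mul hg hh, ContinuousLinearMap.add_apply,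
    ContinuousLinearMap.smul_apply, smul_eq_mul]
  ring

lemma fderiv_conj (hg : DifferentiableAt ℝ g p) (u : E) :
    fderiv ℝ (fun q => (starRingEnd ℂ) (g q)) p u = (starRingEnd ℂ) (fderiv ℝ g p u) := by
  have : HasFDerivAt (fun q => (starRingEnd ℂ) (g q))
      ((Complex.conjCLE.toContinuousLinearMap).comp (fderiv ℝ g p)) p :=
    (Complex.conjCLE.toContinuousLinearMap.hasFDerivAt).comp p hg.hasFDerivAt
  simp [this.fderiv]

lemma differentiableAt_conj (hg : DifferentiableAt ℝ g p) :
    DifferentiableAt ℝ (fun q => (starRingEnd ℂ) (g q)) p :=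
  (Complex.conjCLE.toContinuousLinearMap.hasFDerivAt.comp p hg.hasFDerivAt).differentiableAt

lemma differentiableAt_wop (hf : DifferentiableAt ℝ (fderiv ℝ f) p) :
    DifferentiableAt ℝ (fun q => Wop a b v w f q) p := by
  have h1 : DifferentiableAt ℝ (fun q => fderiv ℝ f q v) p :=
    hf.clm_apply (differentiableAt_const v)
  have h2 : DifferentiableAt ℝ (fun q => fderiv ℝ f q w) p :=
    hf.clm_apply (differentiableAt_const w)
  exact (h1.const_mul a).add (h2.const_mul b)

lemma fderiv_apply_const (hf : DifferentiableAt ℝ (fderiv ℝ f) p) (u x : E) :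
    fderiv ℝ (fun q => fderiv ℝ f q x) p u = fderiv ℝ (fderiv ℝ f) p u x := by
  rw [fderiv_clm_apply hf (differentiableAt_const x)]
  simp

lemma fderiv_wop (hf : DifferentiableAt ℝ (fderiv ℝ f) p) (u : E) :
    fderiv ℝ (fun q => Wop a b v w f q) p u
      = a * (fderiv ℝ (fderiv ℝ f) p u v) + b * (fderiv ℝ (fderiv ℝ f) p u w) := by
  have h1 : DifferentiableAt ℝ (fun q => fderiv ℝ f q v) p :=
    hf.clm_apply (differentiableAt_const v)
  have h2 : DifferentiableAt ℝ (fun q => fderiv ℝ f q w) p :=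
    hf.clm_apply (differentiableAt_const w)
  have : fderiv ℝ (fun q => a * fderiv ℝ f q v + b * fderiv ℝ f q w) p u
      = a * fderiv ℝ (fun q => fderiv ℝ f q v) p u
        + b * fderiv ℝ (fun q => fderiv ℝ f q w) p u := by
    rw [fderiv_fun_add (h1.const_mul a) (h2.const_mul b), fderiv_const_mul h1 a,
      fderiv_const_mul h2 b]
    simp
  rw [show (fun q => Wop a b v w f q) = fun q => a * fderiv ℝ f q v + b * fderiv ℝ f q w from rfl,
    this, fderiv_apply_const hf, fderiv_apply_const hf]

lemma Wop_comm (hf : DifferentiableAt ℝ (fderiv ℝ f) p) (hs : IsSymmSndFDerivAt ℝ f p) :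
    Wop a b v w (fun q => Wop a' b' v' w' f q) p
      = Wop a' b' v' w' (fun q => Wop a b v w f q) p := by
  conv_lhs => rw [Wop]
  conv_rhs => rw [Wop]
  rw [fderiv_wop hf, fderiv_wop hf, fderiv_wop hf, fderiv_wop hf,
    hs.eq v v', hs.eq v w', hs.eq w v', hs.eq w w']
  ring

lemma sum_swap_eq {A B : Type*} [Fintype A] [Fintype B] (g : A → B → ℂ) (h : B → A → ℂ)
    (e : ∀ i j, g i j = h j i) : ∑ i, ∑ j, g i j = ∑ j, ∑ i, h j i := by
  rw [Finset.sum_comm]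
  exact Finset.sum_congr rfl fun j _ => Finset.sum_congr rfl fun i _ => e i j

lemma final_algebra {n m : ℕ} (R S : Fin n → ℂ) (M T F G : Fin m → ℂ)
    (Zz : Fin n → Fin n → ℂ) (Zu : Fin n → Fin m → ℂ)
    (Uz : Fin m → Fin n → ℂ) (Uu : Fin m → Fin m → ℂ)
    (a : Fin m → Fin n → ℂ) (b : Fin m → Fin m → ℂ)
    (c : Fin m → Fin n → ℂ) (d : Fin m → Fin m → ℂ) :
    ((∑ j, R j * (∑ k, S k * Zz j k - (∑ γ, a γ j * G γ + ∑ γ, T γ * Zu j γ)))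
      - ∑ δ, M δ * (∑ k, S k * Uz δ k - (∑ γ, b γ δ * G γ + ∑ γ, T γ * Uu δ γ)))
    - ((∑ k, S k * (∑ j, R j * Zz j k - (∑ δ, c δ k * F δ + ∑ δ, M δ * Uz δ k)))
      - ∑ γ, T γ * (∑ j, R j * Zu j γ - (∑ δ, d δ γ * F δ + ∑ δ, M δ * Uu δ γ)))
    = (∑ γ, (∑ k, S k * c γ k - ∑ δ, T δ * d γ δ) * F γ)
      - ∑ γ, (∑ j, R j * a γ j - ∑ δ, M δ * b γ δ) * G γ := by
  simp only [mul_sub, mul_add, sub_mul, add_mul, Finset.mul_sum, Finset.sum_mul,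
    Finset.sum_sub_distrib, Finset.sum_add_distrib]
  have e1 : ∑ x : Fin n, ∑ i : Fin n, S x * (R i * Zz i x)
      = ∑ x : Fin n, ∑ i : Fin n, R x * (S i * Zz x i) :=
    sum_swap_eq _ _ (fun i j => by ring)
  have e3 : ∑ x : Fin m, ∑ i : Fin n, T x * (R i * Zu i x)
      = ∑ x : Fin n, ∑ i : Fin m, R x * (T i * Zu x i) :=
    sum_swap_eq _ _ (fun i j => by ring)
  have e4 : ∑ x : Fin n, ∑ i : Fin m, S x * (M i * Uz i x)
      = ∑ x : Fin m, ∑ i : Fin n, M x * (S i * Uz x i) :=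
    sum_swap_eq _ _ (fun i j => by ring)
  have e5 : ∑ x : Fin n, ∑ i : Fin m, S x * (c i x * F i)
      = ∑ x : Fin m, ∑ i : Fin n, S i * c x i * F x :=
    sum_swap_eq _ _ (fun i j => by ring)
  have e6 : ∑ x : Fin m, ∑ i : Fin m, T x * (d i x * F i)
      = ∑ x : Fin m, ∑ i : Fin m, T i * d x i * F x :=
    sum_swap_eq _ _ (fun i j => by ring)
  have e7 : ∑ x : Fin n, ∑ i : Fin m, R x * (a i x * G i)
      = ∑ x : Fin m, ∑ i : Fin n, R i * a x i * G x :=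
    sum_swap_eq _ _ (fun i j => by ring)
  have e8 : ∑ x : Fin m, ∑ i : Fin m, M x * (b i x * G i)
      = ∑ x : Fin m, ∑ i : Fin m, M i * b x i * G x :=
    sum_swap_eq _ _ (fun i j => by ring)
  have e9 : ∑ x : Fin m, ∑ i : Fin m, T x * (M i * Uu i x)
      = ∑ x : Fin m, ∑ i : Fin m, M x * (T i * Uu x i) :=
    sum_swap_eq _ _ (fun i j => by ring)
  linear_combination -e1 - e7 + e3 + e4 + e8 - e9 + e5 - e6



variable {n m : ℕ}


lemma wz_eq (g : ((Fin n → ℂ) × (Fin m → ℂ)) → ℂ) (k : Fin n) (p₀ : ((Fin n → ℂ) × (Fin m → ℂ))) :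
    wz g k p₀ = Wop (1/2) (-(Complex.I/2)) ((Pi.single k 1 : Fin n → ℂ), (0 : Fin m → ℂ))
      ((Pi.single k Complex.I : Fin n → ℂ), (0 : Fin m → ℂ)) g p₀ := by
  simp only [wz, Wop]; ring

lemma wzbar_eq (g : ((Fin n → ℂ) × (Fin m → ℂ)) → ℂ) (k : Fin n) (p₀ : ((Fin n → ℂ) × (Fin m → ℂ))) :
    wzbar g k p₀ = Wop (1/2) (Complex.I/2) ((Pi.single k 1 : Fin n → ℂ), (0 : Fin m → ℂ))
      ((Pi.single k Complex.I : Fin n → ℂ), (0 : Fin m → ℂ)) g p₀ := by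
  simp only [wzbar, Wop]; ring

lemma wu_eq (g : ((Fin n → ℂ) × (Fin m → ℂ)) → ℂ) (γ : Fin m) (p₀ : ((Fin n → ℂ) × (Fin m → ℂ))) :
    wu g γ p₀ = Wop (1/2) (-(Complex.I/2)) ((0 : Fin n → ℂ), (Pi.single γ 1 : Fin m → ℂ))
      ((0 : Fin n → ℂ), (Pi.single γ Complex.I : Fin m → ℂ)) g p₀ := by
  simp only [wu, Wop]; ring

lemma wubar_eq (g : ((Fin n → ℂ) × (Fin m → ℂ)) → ℂ) (γ : Fin m) (p₀ : ((Fin n → ℂ) × (Fin m → ℂ))) :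
    wubar g γ p₀ = Wop (1/2) (Complex.I/2) ((0 : Fin n → ℂ), (Pi.single γ 1 : Fin m → ℂ))
      ((0 : Fin n → ℂ), (Pi.single γ Complex.I : Fin m → ℂ)) g p₀ := by
  simp only [wubar, Wop]; ring

lemma wz_fun (g : ((Fin n → ℂ) × (Fin m → ℂ)) → ℂ) (k : Fin n) :
    wz g k = fun q => Wop (1/2) (-(Complex.I/2)) ((Pi.single k 1 : Fin n → ℂ), (0 : Fin m → ℂ))
      ((Pi.single k Complex.I : Fin n → ℂ), (0 : Fin m → ℂ)) g q := funext (wz_eq g k)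

lemma wzbar_fun (g : ((Fin n → ℂ) × (Fin m → ℂ)) → ℂ) (k : Fin n) :
    wzbar g k = fun q => Wop (1/2) (Complex.I/2) ((Pi.single k 1 : Fin n → ℂ), (0 : Fin m → ℂ))
      ((Pi.single k Complex.I : Fin n → ℂ), (0 : Fin m → ℂ)) g q := funext (wzbar_eq g k)

lemma wu_fun (g : ((Fin n → ℂ) × (Fin m → ℂ)) → ℂ) (γ : Fin m) :
    wu g γ = fun q => Wop (1/2) (-(Complex.I/2)) ((0 : Fin n → ℂ), (Pi.single γ 1 : Fin m → ℂ))
      ((0 : Fin n → ℂ), (Pi.single γ Complex.I : Fin m → ℂ)) g q := funext (wu_eq g γ)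

lemma wubar_fun (g : ((Fin n → ℂ) × (Fin m → ℂ)) → ℂ) (γ : Fin m) :
    wubar g γ = fun q => Wop (1/2) (Complex.I/2) ((0 : Fin n → ℂ), (Pi.single γ 1 : Fin m → ℂ))
      ((0 : Fin n → ℂ), (Pi.single γ Complex.I : Fin m → ℂ)) g q := funext (wubar_eq g γ)

section BaseOnly

variable {ρ' : (Fin n → ℂ) → ℂ} {p₀ : ((Fin n → ℂ) × (Fin m → ℂ))}

/-- Fréchet derivative of a base-only holomorphic function. -/
lemma base_hasFDerivAt (hρ' : DifferentiableAt ℂ ρ' p₀.1) :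
    HasFDerivAt (fun q : ((Fin n → ℂ) × (Fin m → ℂ)) => ρ' q.1)
      (((fderiv ℂ ρ' p₀.1).restrictScalars ℝ).comp
        (ContinuousLinearMap.fst ℝ (Fin n → ℂ) (Fin m → ℂ))) p₀ :=
  (hρ'.hasFDerivAt.restrictScalars ℝ).comp p₀ hasFDerivAt_fst

lemma base_fderiv_apply (hρ' : DifferentiableAt ℂ ρ' p₀.1) (v : Fin n → ℂ) (u : Fin m → ℂ) :
    fderiv ℝ (fun q : ((Fin n → ℂ) × (Fin m → ℂ)) => ρ' q.1) p₀ (v, u) = fderiv ℂ ρ' p₀.1 v := by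
  rw [(base_hasFDerivAt hρ').fderiv]
  rfl

lemma single_I (k : Fin n) :
    (Pi.single k Complex.I : Fin n → ℂ) = Complex.I • (Pi.single k 1 : Fin n → ℂ) := by
  rw [← Pi.single_smul]; norm_num

lemma wzbar_base (hρ' : DifferentiableAt ℂ ρ' p₀.1) (k : Fin n) : wzbar (fun q : ((Fin n → ℂ) × (Fin m → ℂ)) => ρ' q.1) k p₀ = 0 := by
  rw [wzbar, base_fderiv_apply hρ', base_fderiv_apply hρ', single_I,
    (fderiv ℂ ρ' p₀.1).map_smul]
  set c := fderiv ℂ ρ' p₀.1 (Pi.single k 1)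
  simp only [smul_eq_mul]
  linear_combination (c / 2) * Complex.I_sq

lemma wz_conj_base (hρ' : DifferentiableAt ℂ ρ' p₀.1) (k : Fin n) :
    wz (fun q : ((Fin n → ℂ) × (Fin m → ℂ)) => (starRingEnd ℂ) (ρ' q.1)) k p₀ = 0 := by
  have hd : DifferentiableAt ℝ (fun q : ((Fin n → ℂ) × (Fin m → ℂ)) => ρ' q.1) p₀ :=
    (base_hasFDerivAt hρ').differentiableAt
  rw [wz, fderiv_conj hd, fderiv_conj hd, base_fderiv_apply hρ', base_fderiv_apply hρ',
    single_I, (fderiv ℂ ρ' p₀.1).map_smul]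
  set c := fderiv ℂ ρ' p₀.1 (Pi.single k 1)
  simp only [smul_eq_mul, map_mul, Complex.conj_I]
  linear_combination ((starRingEnd ℂ) c / 2) * Complex.I_sq

lemma wu_base (hρ' : DifferentiableAt ℂ ρ' p₀.1) (γ : Fin m) : wu (fun q : ((Fin n → ℂ) × (Fin m → ℂ)) => ρ' q.1) γ p₀ = 0 := by
  rw [wu, show ((0 : Fin n → ℂ), (Pi.single γ 1 : Fin m → ℂ))
      = ((0 : Fin n → ℂ), (Pi.single γ (1:ℂ) : Fin m → ℂ)) from rfl,
    base_fderiv_apply hρ', base_fderiv_apply hρ']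
  simp

lemma wubar_base (hρ' : DifferentiableAt ℂ ρ' p₀.1) (γ : Fin m) : wubar (fun q : ((Fin n → ℂ) × (Fin m → ℂ)) => ρ' q.1) γ p₀ = 0 := by
  rw [wubar, base_fderiv_apply hρ', base_fderiv_apply hρ']
  simp

lemma wu_conj_base (hρ' : DifferentiableAt ℂ ρ' p₀.1) (γ : Fin m) :
    wu (fun q : ((Fin n → ℂ) × (Fin m → ℂ)) => (starRingEnd ℂ) (ρ' q.1)) γ p₀ = 0 := by
  have hd : DifferentiableAt ℝ (fun q : ((Fin n → ℂ) × (Fin m → ℂ)) => ρ' q.1) p₀ :=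
    (base_hasFDerivAt hρ').differentiableAt
  rw [wu, fderiv_conj hd, fderiv_conj hd, base_fderiv_apply hρ', base_fderiv_apply hρ']
  simp

end BaseOnly

end Stmt9Aux

open Stmt9Aux

/-- the mixed commutator identity
`δ_α(δ_β̄ f) − δ_β̄(δ_α f) = (δ_β̄ N^γ_α)·∂̇_γ f − (δ_α N^γ̄_β̄)·∂̇_γ̄ f`, the local
form of the bracket `[𝒳_α,𝒳_β̄]_𝒯 = (δ_β̄ N^γ_α)𝒱_γ − (δ_α N^γ̄_β̄)𝒱_γ̄`. -/
theorem stmt9 {n m : ℕ} (U : Set (Fin n → ℂ)) (hU : IsOpen U)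
    (ρ : Fin n → Fin m → (Fin n → ℂ) → ℂ)
    (hρ : ∀ (k : Fin n) (α : Fin m), DifferentiableOn ℂ (ρ k α) U)
    (N : Fin m → Fin m → (Fin n → ℂ) × (Fin m → ℂ) → ℂ)
    (hN : ∀ (γ α : Fin m), ContDiffOn ℝ (⊤ : ℕ∞) (N γ α)
      {p : (Fin n → ℂ) × (Fin m → ℂ) | p.1 ∈ U})
    (f : (Fin n → ℂ) × (Fin m → ℂ) → ℂ)
    (hf : ContDiffOn ℝ 2 f {p : (Fin n → ℂ) × (Fin m → ℂ) | p.1 ∈ U})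
    (p : (Fin n → ℂ) × (Fin m → ℂ)) (hp : p.1 ∈ U) (α β : Fin m) :
    hdel ρ N (hdelbar ρ N f β) α p - hdelbar ρ N (hdel ρ N f α) β p
      = (∑ γ, hdelbar ρ N (N γ α) β p * wu f γ p)
        - ∑ γ, hdel ρ N (fun q => (starRingEnd ℂ) (N γ β q)) α p * wubar f γ p := by
    classical
  have hΩ : IsOpen {q : (Fin n → ℂ) × (Fin m → ℂ) | q.1 ∈ U} := hU.preimage continuous_fst
  have hfp : ContDiffAt ℝ 2 f p := hf.contDiffAt (hΩ.mem_nhds hp)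
  have hdF : DifferentiableAt ℝ (fderiv ℝ f) p :=
    (hfp.fderiv_right (m := 1) (by norm_num)).differentiableAt one_ne_zero
  have hsymm : IsSymmSndFDerivAt ℝ f p := hfp.isSymmSndFDerivAt (by simp)
  have hρd : ∀ (k : Fin n) (α' : Fin m), DifferentiableAt ℂ (ρ k α') p.1 := fun k α' =>
    (hρ k α').differentiableAt (hU.mem_nhds hp)
  have hrd : ∀ (k : Fin n) (α' : Fin m),
      DifferentiableAt ℝ (fun q : (Fin n → ℂ) × (Fin m → ℂ) => ρ k α' q.1) p := fun k α' =>
    (base_hasFDerivAt (hρd k α')).differentiableAt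
  have hrcd : ∀ (k : Fin n) (α' : Fin m),
      DifferentiableAt ℝ (fun q : (Fin n → ℂ) × (Fin m → ℂ) => (starRingEnd ℂ) (ρ k α' q.1)) p :=
    fun k α' => differentiableAt_conj (hrd k α')
  have hNd : ∀ (γ α' : Fin m), DifferentiableAt ℝ (N γ α') p := fun γ α' =>
    ((hN γ α').contDiffAt (hΩ.mem_nhds hp)).differentiableAt (by simp)
  have hNcd : ∀ (γ α' : Fin m),
      DifferentiableAt ℝ (fun q => (starRingEnd ℂ) (N γ α' q)) p :=
    fun γ α' => differentiableAt_conj (hNd γ α')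
  have hwz : ∀ k, DifferentiableAt ℝ (wz f k) p := fun k => by
    rw [wz_fun]; exact differentiableAt_wop hdF
  have hwzbar : ∀ k, DifferentiableAt ℝ (wzbar f k) p := fun k => by
    rw [wzbar_fun]; exact differentiableAt_wop hdF
  have hwu : ∀ γ, DifferentiableAt ℝ (wu f γ) p := fun γ => by
    rw [wu_fun]; exact differentiableAt_wop hdF
  have hwubar : ∀ γ, DifferentiableAt ℝ (wubar f γ) p := fun γ => by
    rw [wubar_fun]; exact differentiableAt_wop hdF
  -- vanishing lemmas
  have van1 : ∀ (k : Fin n) (j : Fin n),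
      wz (fun q => (starRingEnd ℂ) (ρ k β q.1)) j p = 0 := fun k j => wz_conj_base (hρd k β) j
  have van2 : ∀ (k : Fin n) (δ : Fin m),
      wu (fun q => (starRingEnd ℂ) (ρ k β q.1)) δ p = 0 := fun k δ => wu_conj_base (hρd k β) δ
  have van3 : ∀ (j : Fin n) (k : Fin n),
      wzbar (fun q : (Fin n → ℂ) × (Fin m → ℂ) => ρ j α q.1) k p = 0 :=
    fun j k => wzbar_base (hρd j α) k
  have van4 : ∀ (j : Fin n) (γ : Fin m),
      wubar (fun q : (Fin n → ℂ) × (Fin m → ℂ) => ρ j α q.1) γ p = 0 :=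
    fun j γ => wubar_base (hρd j α) γ
  -- commutation of mixed Wirtinger derivatives
  have hcomm : ∀ (a b a' b' : ℂ) (v w v' w' : (Fin n → ℂ) × (Fin m → ℂ)),
      Wop a b v w (fun q => Wop a' b' v' w' f q) p
        = Wop a' b' v' w' (fun q => Wop a b v w f q) p :=
    fun _ _ _ _ _ _ _ _ => Wop_comm hdF hsymm
  have cZz : ∀ (j k : Fin n), wzbar (wz f j) k p = wz (wzbar f k) j p := by
    intro j k
    rw [wzbar_eq, wz_fun f j, hcomm, ← wzbar_fun f k, ← wz_eq]
  have cUz : ∀ (δ : Fin m) (k : Fin n), wzbar (wu f δ) k p = wu (wzbar f k) δ p := by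
    intro δ k
    rw [wzbar_eq, wu_fun f δ, hcomm, ← wzbar_fun f k, ← wu_eq]
  have cZu : ∀ (j : Fin n) (γ : Fin m), wubar (wz f j) γ p = wz (wubar f γ) j p := by
    intro j γ
    rw [wubar_eq, wz_fun f j, hcomm, ← wubar_fun f γ, ← wz_eq]
  have cUu : ∀ (δ γ : Fin m), wubar (wu f δ) γ p = wu (wubar f γ) δ p := by
    intro δ γ
    rw [wubar_eq, wu_fun f δ, hcomm, ← wubar_fun f γ, ← wu_eq]
  -- expansion of the inner operators
  have hprod1 : ∀ k : Fin n,
      DifferentiableAt ℝ (fun q => (starRingEnd ℂ) (ρ k β q.1) * wzbar f k q) p :=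
    fun k => (hrcd k β).mul (hwzbar k)
  have hprod2 : ∀ γ : Fin m,
      DifferentiableAt ℝ (fun q => (starRingEnd ℂ) (N γ β q) * wubar f γ q) p :=
    fun γ => (hNcd γ β).mul (hwubar γ)
  have hprod3 : ∀ j : Fin n, DifferentiableAt ℝ (fun q => ρ j α q.1 * wz f j q) p :=
    fun j => (hrd j α).mul (hwz j)
  have hprod4 : ∀ δ : Fin m, DifferentiableAt ℝ (fun q => N δ α q * wu f δ q) p :=
    fun δ => (hNd δ α).mul (hwu δ)
  have E1 : ∀ (a b : ℂ) (v w : (Fin n → ℂ) × (Fin m → ℂ)),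
      Wop a b v w (hdelbar ρ N f β) p
        = (∑ k, Wop a b v w (fun q => (starRingEnd ℂ) (ρ k β q.1)) p * wzbar f k p
            + ∑ k, (starRingEnd ℂ) (ρ k β p.1) * Wop a b v w (wzbar f k) p)
          - (∑ γ, Wop a b v w (fun q => (starRingEnd ℂ) (N γ β q)) p * wubar f γ p
            + ∑ γ, (starRingEnd ℂ) (N γ β p) * Wop a b v w (wubar f γ) p) := by
    intro a b v w
    have h1 : DifferentiableAt ℝ
        (fun q => ∑ k, (starRingEnd ℂ) (ρ k β q.1) * wzbar f k q) p :=
      DifferentiableAt.fun_sum fun k _ => hprod1 k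
    have h2 : DifferentiableAt ℝ
        (fun q => ∑ γ, (starRingEnd ℂ) (N γ β q) * wubar f γ q) p :=
      DifferentiableAt.fun_sum fun γ _ => hprod2 γ
    calc Wop a b v w (hdelbar ρ N f β) p
        = Wop a b v w (fun q => (∑ k, (starRingEnd ℂ) (ρ k β q.1) * wzbar f k q)
            - ∑ γ, (starRingEnd ℂ) (N γ β q) * wubar f γ q) p := rfl
      _ = Wop a b v w (fun q => ∑ k, (starRingEnd ℂ) (ρ k β q.1) * wzbar f k q) p
          - Wop a b v w (fun q => ∑ γ, (starRingEnd ℂ) (N γ β q) * wubar f γ q) p :=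
          Wop_sub h1 h2
      _ = (∑ k, Wop a b v w (fun q => (starRingEnd ℂ) (ρ k β q.1) * wzbar f k q) p)
          - ∑ γ, Wop a b v w (fun q => (starRingEnd ℂ) (N γ β q) * wubar f γ q) p := by
          rw [Wop_sum Finset.univ _ (fun k _ => hprod1 k),
            Wop_sum Finset.univ _ (fun γ _ => hprod2 γ)]
      _ = (∑ k, (Wop a b v w (fun q => (starRingEnd ℂ) (ρ k β q.1)) p * wzbar f k p
            + (starRingEnd ℂ) (ρ k β p.1) * Wop a b v w (wzbar f k) p))
          - ∑ γ, (Wop a b v w (fun q => (starRingEnd ℂ) (N γ β q)) p * wubar f γ p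
            + (starRingEnd ℂ) (N γ β p) * Wop a b v w (wubar f γ) p) := by
          refine congrArg₂ (· - ·) (Finset.sum_congr rfl fun k _ => ?_)
            (Finset.sum_congr rfl fun γ _ => ?_)
          · exact Wop_mul (hrcd k β) (hwzbar k)
          · exact Wop_mul (hNcd γ β) (hwubar γ)
      _ = _ := by rw [Finset.sum_add_distrib, Finset.sum_add_distrib]
  have E2 : ∀ (a b : ℂ) (v w : (Fin n → ℂ) × (Fin m → ℂ)),
      Wop a b v w (hdel ρ N f α) p
        = (∑ j, Wop a b v w (fun q : (Fin n → ℂ) × (Fin m → ℂ) => ρ j α q.1) p * wz f j p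
            + ∑ j, ρ j α p.1 * Wop a b v w (wz f j) p)
          - (∑ δ, Wop a b v w (N δ α) p * wu f δ p
            + ∑ δ, N δ α p * Wop a b v w (wu f δ) p) := by
    intro a b v w
    have h1 : DifferentiableAt ℝ (fun q => ∑ j, ρ j α q.1 * wz f j q) p :=
      DifferentiableAt.fun_sum fun j _ => hprod3 j
    have h2 : DifferentiableAt ℝ (fun q => ∑ δ, N δ α q * wu f δ q) p :=
      DifferentiableAt.fun_sum fun δ _ => hprod4 δ
    calc Wop a b v w (hdel ρ N f α) p
        = Wop a b v w (fun q => (∑ j, ρ j α q.1 * wz f j q)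
            - ∑ δ, N δ α q * wu f δ q) p := rfl
      _ = Wop a b v w (fun q => ∑ j, ρ j α q.1 * wz f j q) p
          - Wop a b v w (fun q => ∑ δ, N δ α q * wu f δ q) p := Wop_sub h1 h2
      _ = (∑ j, Wop a b v w (fun q => ρ j α q.1 * wz f j q) p)
          - ∑ δ, Wop a b v w (fun q => N δ α q * wu f δ q) p := by
          rw [Wop_sum Finset.univ _ (fun j _ => hprod3 j),
            Wop_sum Finset.univ _ (fun δ _ => hprod4 δ)]
      _ = (∑ j, (Wop a b v w (fun q : (Fin n → ℂ) × (Fin m → ℂ) => ρ j α q.1) p * wz f j p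
            + ρ j α p.1 * Wop a b v w (wz f j) p))
          - ∑ δ, (Wop a b v w (N δ α) p * wu f δ p
            + N δ α p * Wop a b v w (wu f δ) p) := by
          refine congrArg₂ (· - ·) (Finset.sum_congr rfl fun j _ => ?_)
            (Finset.sum_congr rfl fun δ _ => ?_)
          · exact Wop_mul (hrd j α) (hwz j)
          · exact Wop_mul (hNd δ α) (hwu δ)
      _ = _ := by rw [Finset.sum_add_distrib, Finset.sum_add_distrib]
  -- the four outer derivatives
  have K1 : ∀ j : Fin n, wz (hdelbar ρ N f β) j p
      = ∑ k, (starRingEnd ℂ) (ρ k β p.1) * wz (wzbar f k) j p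
        - (∑ γ, wz (fun q => (starRingEnd ℂ) (N γ β q)) j p * wubar f γ p
          + ∑ γ, (starRingEnd ℂ) (N γ β p) * wz (wubar f γ) j p) := by
    intro j
    rw [wz_eq, E1]
    simp only [← wz_eq]
    simp only [van1, zero_mul, Finset.sum_const_zero, zero_add]
  have K2 : ∀ δ : Fin m, wu (hdelbar ρ N f β) δ p
      = ∑ k, (starRingEnd ℂ) (ρ k β p.1) * wu (wzbar f k) δ p
        - (∑ γ, wu (fun q => (starRingEnd ℂ) (N γ β q)) δ p * wubar f γ p
          + ∑ γ, (starRingEnd ℂ) (N γ β p) * wu (wubar f γ) δ p) := by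
    intro δ
    rw [wu_eq, E1]
    simp only [← wu_eq]
    simp only [van2, zero_mul, Finset.sum_const_zero, zero_add]
  have K3 : ∀ k : Fin n, wzbar (hdel ρ N f α) k p
      = ∑ j, ρ j α p.1 * wz (wzbar f k) j p
        - (∑ δ, wzbar (N δ α) k p * wu f δ p
          + ∑ δ, N δ α p * wu (wzbar f k) δ p) := by
    intro k
    rw [wzbar_eq, E2]
    simp only [← wzbar_eq]
    simp only [van3, zero_mul, Finset.sum_const_zero, zero_add]
    simp only [cZz, cUz]
  have K4 : ∀ γ : Fin m, wubar (hdel ρ N f α) γ p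
      = ∑ j, ρ j α p.1 * wz (wubar f γ) j p
        - (∑ δ, wubar (N δ α) γ p * wu f δ p
          + ∑ δ, N δ α p * wu (wubar f γ) δ p) := by
    intro γ
    rw [wubar_eq, E2]
    simp only [← wubar_eq]
    simp only [van4, zero_mul, Finset.sum_const_zero, zero_add]
    simp only [cZu, cUu]
  rw [show hdel ρ N (hdelbar ρ N f β) α p
      = ∑ j, ρ j α p.1 * wz (hdelbar ρ N f β) j p
        - ∑ δ, N δ α p * wu (hdelbar ρ N f β) δ p from rfl,
    show hdelbar ρ N (hdel ρ N f α) β p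
      = ∑ k, (starRingEnd ℂ) (ρ k β p.1) * wzbar (hdel ρ N f α) k p
        - ∑ γ, (starRingEnd ℂ) (N γ β p) * wubar (hdel ρ N f α) γ p from rfl]
  simp only [K1, K2, K3, K4]
  simp only [hdelbar, hdel]
  exact final_algebra (fun j => ρ j α p.1) (fun k => (starRingEnd ℂ) (ρ k β p.1))
    (fun δ => N δ α p) (fun γ => (starRingEnd ℂ) (N γ β p))
    (fun δ => wu f δ p) (fun γ => wubar f γ p)
    (fun j k => wz (wzbar f k) j p) (fun j γ => wz (wubar f γ) j p)
    (fun δ k => wu (wzbar f k) δ p) (fun δ γ => wu (wubar f γ) δ p)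
    (fun γ j => wz (fun q => (starRingEnd ℂ) (N γ β q)) j p)
    (fun γ δ => wu (fun q => (starRingEnd ℂ) (N γ β q)) δ p)
    (fun γ k => wzbar (N γ α) k p) (fun γ δ => wubar (N γ α) δ p)
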